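/- Theorem 6 (Spectrum of AᵀA − I): Let D > 0, τ > 0, dx > 0, x_0 ∈ ℝ, N ≥ 1, set x_ℓ = x_0 + ℓ·dx and G_ℓ = (1/2)[erf((x_ℓ + dx/2)/√(4Dτ)) − erf((x_ℓ − dx/2)/√(4Dτ))] for ℓ = 0, …, N−1, and let A = circ(G_0, …, G_{N−1}) be the circulant matrix with these entries. Then every complex eigenvalue λ of A satisfies |λ| < 1, and every (real) eigenvalue of the symmetric matrix AᵀA − I is strictly negative. -/

import Mathlib

open MeasureTheory intervalIntegral Matrix

noncomputable section

/-- The error function `erf(z) = (2/√π) ∫_0^z exp(-s²) ds`. -/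
def erf (z : ℝ) : ℝ :=
  (2 / Real.sqrt Real.pi) * ∫ s in (0:ℝ)..z, Real.exp (-(s ^ 2))

/-- The grid points `x_ℓ = x₀ + ℓ·dx`. -/
def gridPt (x₀ dx : ℝ) (ℓ : ℕ) : ℝ := x₀ + ℓ * dx

/-- The discrete Green's coefficients
`G_ℓ = (1/2)[erf((x_ℓ + dx/2)/√(4Dτ)) - erf((x_ℓ - dx/2)/√(4Dτ))]`. -/
def Gcoef (D τ x₀ dx : ℝ) (ℓ : ℕ) : ℝ :=
  (1/2) * (erf ((gridPt x₀ dx ℓ + dx/2) / Real.sqrt (4*D*τ))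
    - erf ((gridPt x₀ dx ℓ - dx/2) / Real.sqrt (4*D*τ)))


/-!
`G_ℓ` is half the increment of `erf` across the `ℓ`-th grid cell, so the `G_ℓ` are nonnegative and
telescope to a sum `S` bounded by half the total variation of `erf`, which is `< 1` since the
Gaussian has total mass `√π` and positive mass outside every bounded interval. Every row of the
circulant matrices `A` and `Aᵀ` then has `ℓ¹`-norm `S`, so both have `L∞` operator norm at most
`S < 1`. Since the spectrum is bounded by any unital submultiplicative norm, `|λ| ≤ S`
for eigenvalues of `A` and `|μ + 1| ≤ S² < 1` for eigenvalues `μ` of `AᵀA - I`.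
-/

open Real Finset

lemma erf_sub_erf (a b : ℝ) : erf b - erf a = 2 / √π * ∫ s in a..b, exp (-(s ^ 2)) := by
  have hint (u v : ℝ) : IntervalIntegrable (fun s : ℝ => exp (-(s ^ 2))) volume u v :=
    (by fun_prop : Continuous fun s : ℝ => exp (-(s ^ 2))).intervalIntegrable u v
  rw [erf, erf, ← mul_sub, integral_interval_sub_left (hint 0 b) (hint 0 a)]

lemma erf_monotone : Monotone erf := fun a b hab => sub_nonneg.mp <| by
  rw [erf_sub_erf]
  exact mul_nonneg (by positivity) (integral_nonneg hab fun _ _ => (exp_pos _).le)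

lemma erf_sub_erf_lt_two {a b : ℝ} (hab : a ≤ b) : erf b - erf a < 2 := by
  have hint : Integrable fun s : ℝ => exp (-(s ^ 2)) := by
    simpa using integrable_exp_neg_mul_sq one_pos
  have htotal : ∫ s, exp (-(s ^ 2)) = √π := by simpa using integral_gaussian 1
  have hsplit := integral_add_compl (measurableSet_Ioc (a := a) (b := b)) hint
  have hout : 0 < ∫ s in (Set.Ioc a b)ᶜ, exp (-(s ^ 2)) := by
    rw [setIntegral_pos_iff_support_of_nonneg_ae
      (Filter.Eventually.of_forall fun _ => (exp_pos _).le) hint.integrableOn]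
    have hsupp : Function.support (fun s : ℝ => exp (-(s ^ 2))) = Set.univ :=
      Set.eq_univ_of_forall fun _ => (exp_pos _).ne'
    rw [hsupp, Set.univ_inter]
    have hIoi : Set.Ioi b ⊆ (Set.Ioc a b)ᶜ := fun _ hx h => hx.not_ge h.2
    exact (Measure.measure_Ioi_pos volume b).trans_le (measure_mono hIoi)
  rw [erf_sub_erf, intervalIntegral.integral_of_le hab]
  calc 2 / √π * ∫ s in Set.Ioc a b, exp (-(s ^ 2)) < 2 / √π * √π := by gcongr; linarith
    _ = 2 := by field_simp

def scaledCellEdge (D τ x₀ dx : ℝ) (k : ℕ) : ℝ := (x₀ - dx / 2 + k * dx) / √(4 * D * τ)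

variable {D τ x₀ dx : ℝ}

lemma scaledCellEdge_monotone (D τ x₀ : ℝ) (hdx : 0 ≤ dx) : Monotone (scaledCellEdge D τ x₀ dx) :=
  fun a b hab => by unfold scaledCellEdge; gcongr

lemma Gcoef_eq_half_sub (ℓ : ℕ) :
    Gcoef D τ x₀ dx ℓ =
      (erf (scaledCellEdge D τ x₀ dx (ℓ + 1)) - erf (scaledCellEdge D τ x₀ dx ℓ)) / 2 := by
  rw [Gcoef, gridPt, scaledCellEdge, scaledCellEdge]
  push_cast
  ring_nf

lemma Gcoef_nonneg (hdx : 0 ≤ dx) (ℓ : ℕ) : 0 ≤ Gcoef D τ x₀ dx ℓ := by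
  have := erf_monotone (scaledCellEdge_monotone D τ x₀ hdx ℓ.le_succ)
  rw [Gcoef_eq_half_sub]
  linarith

lemma sum_range_Gcoef_lt_one (hdx : 0 ≤ dx) (N : ℕ) :
    ∑ ℓ ∈ range N, Gcoef D τ x₀ dx ℓ < 1 := by
  have := erf_sub_erf_lt_two (scaledCellEdge_monotone D τ x₀ hdx N.zero_le)
  simp_rw [Gcoef_eq_half_sub, ← sum_div]
  rw [sum_range_sub (fun k => erf (scaledCellEdge D τ x₀ dx k))]
  linarith

section CirculantSpectrum

attribute [local instance] Matrix.linftyOpNormedRing Matrix.linftyOpNormedAlgebra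

variable {n 𝕜 : Type*} [Fintype n] [DecidableEq n] [NormedField 𝕜]

lemma linfty_opNorm_circulant_le [AddGroup n] (v : n → 𝕜) : ‖circulant v‖ ≤ ∑ i, ‖v i‖ := by
  suffices ‖circulant v‖₊ ≤ ∑ i, ‖v i‖₊ by simpa [← coe_nnnorm] using NNReal.coe_le_coe.mpr this
  rw [linfty_opNNNorm_def]
  exact Finset.sup_le fun i _ => (Equiv.sum_comp (Equiv.subLeft i) fun j => ‖v j‖₊).le

variable [Nonempty n] [CompleteSpace 𝕜] {k : 𝕜}

lemma norm_le_linfty_opNorm_of_mem_spectrum {A : Matrix n n 𝕜} (hk : k ∈ spectrum 𝕜 A) :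
    ‖k‖ ≤ ‖A‖ :=
  -- The `L∞` norm induces the entrywise uniformity, but instance search does not see this.
  @spectrum.norm_le_norm_of_mem _ _ _ _ _ (inferInstanceAs (CompleteSpace (Matrix n n 𝕜))) _ _ _ hk

variable [AddGroup n] {v : n → 𝕜}

lemma norm_le_of_mem_spectrum_circulant (hk : k ∈ spectrum 𝕜 (circulant v)) :
    ‖k‖ ≤ ∑ i, ‖v i‖ :=
  (norm_le_linfty_opNorm_of_mem_spectrum hk).trans (linfty_opNorm_circulant_le v)

lemma norm_le_of_mem_spectrum_transpose_mul_circulant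
    (hk : k ∈ spectrum 𝕜 ((circulant v)ᵀ * circulant v)) : ‖k‖ ≤ (∑ i, ‖v i‖) ^ 2 := by
  have hneg : ∑ i, ‖v (-i)‖ = ∑ i, ‖v i‖ := Equiv.sum_comp (Equiv.neg n) fun i => ‖v i‖
  calc ‖k‖ ≤ ‖(circulant v)ᵀ * circulant v‖ := norm_le_linfty_opNorm_of_mem_spectrum hk
    _ ≤ ‖circulant fun i => v (-i)‖ * ‖circulant v‖ := by
      rw [transpose_circulant]; exact norm_mul_le _ _
    _ ≤ (∑ i, ‖v i‖) ^ 2 := by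
      rw [sq]
      gcongr
      · exact (linfty_opNorm_circulant_le _).trans hneg.le
      · exact linfty_opNorm_circulant_le _

end CirculantSpectrum

theorem theorem6_spectrum_general (D τ dx x₀ : ℝ) (hdx : 0 < dx)
    (N : ℕ) (hN : 1 ≤ N) :
    (∀ lam ∈ spectrum ℂ
        (Matrix.circulant (fun ℓ : Fin N => (Gcoef D τ x₀ dx ℓ.val : ℂ))),
      ‖lam‖ < 1) ∧
    (∀ μ ∈ spectrum ℝ
        ((Matrix.circulant (fun ℓ : Fin N => Gcoef D τ x₀ dx ℓ.val))ᵀ *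
          Matrix.circulant (fun ℓ : Fin N => Gcoef D τ x₀ dx ℓ.val) - 1),
      μ < 0) := by
  have : NeZero N := ⟨by omega⟩
  set G : Fin N → ℝ := fun ℓ => Gcoef D τ x₀ dx ℓ.val
  have hG : ∑ ℓ, ‖G ℓ‖ < 1 := by
    simp_rw [G, Real.norm_of_nonneg (Gcoef_nonneg hdx.le _)]
    rw [Fin.sum_univ_eq_sum_range (Gcoef D τ x₀ dx) N]
    exact sum_range_Gcoef_lt_one hdx.le N
  refine ⟨fun lam hlam => ?_, fun μ hμ => ?_⟩
  · calc ‖lam‖ ≤ ∑ ℓ, ‖(G ℓ : ℂ)‖ := norm_le_of_mem_spectrum_circulant hlam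
      _ = ∑ ℓ, ‖G ℓ‖ := by simp_rw [Complex.norm_real]
      _ < 1 := hG
  · have hμ1 : μ + 1 ∈ spectrum ℝ ((circulant G)ᵀ * circulant G) := by
      rwa [spectrum.add_mem_iff, map_one, neg_add_eq_sub]
    have hbound := norm_le_of_mem_spectrum_transpose_mul_circulant hμ1
    have hsq : (∑ ℓ, ‖G ℓ‖) ^ 2 < 1 := pow_lt_one₀ (by positivity) hG two_ne_zero
    linarith [le_abs_self (μ + 1), Real.norm_eq_abs (μ + 1)]

/-- Theorem 6 (Spectrum of `AᵀA - I`): with `A = circ(G_0, …, G_{N-1})` the circulant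
matrix of the discrete Green's coefficients, every complex eigenvalue `λ` of `A`
satisfies `|λ| < 1`, and every real eigenvalue of the symmetric matrix `AᵀA - I` is
strictly negative. -/
theorem theorem6_spectrum (D τ dx x₀ : ℝ) (hD : 0 < D) (hτ : 0 < τ) (hdx : 0 < dx)
    (N : ℕ) (hN : 1 ≤ N) :
    (∀ lam ∈ spectrum ℂ
        (Matrix.circulant (fun ℓ : Fin N => (Gcoef D τ x₀ dx ℓ.val : ℂ))),
      ‖lam‖ < 1) ∧
    (∀ μ ∈ spectrum ℝ
        ((Matrix.circulant (fun ℓ : Fin N => Gcoef D τ x₀ dx ℓ.val))ᵀ *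
          Matrix.circulant (fun ℓ : Fin N => Gcoef D τ x₀ dx ℓ.val) - 1),
      μ < 0) :=
  theorem6_spectrum_general D τ dx x₀ hdx N hN
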